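/- Let C be a singly even self-dual binary code of length n with n divisible by 8, with doubly even subcode C₀ and cosets C₀, C₁, C₂, C₃ of C₀ in C₀⊥ where C = C₀ ∪ C₂. Then both C₀ ∪ C₁ and C₀ ∪ C₃ are doubly even self-dual codes of length n, and each intersects C in the subspace C₀ of dimension n/2 − 1 (i.e., each is a neighbor of C). -/

import Mathlib

open Matrix

/-- The (Hamming) weight of a vector in 𝔽₂ⁿ. -/
def wt {n : ℕ} (x : Fin n → ZMod 2) : ℕ :=
  (Finset.univ.filter (fun i => x i ≠ 0)).card

/-- The dual of a set of vectors, w.r.t. the standard inner product. -/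
def dualSet {n : ℕ} (S : Set (Fin n → ZMod 2)) : Set (Fin n → ZMod 2) :=
  {x | ∀ y ∈ S, x ⬝ᵥ y = 0}

/-- The minimum non-zero weight among vectors of a set. -/
noncomputable def minWtSet {n : ℕ} (S : Set (Fin n → ZMod 2)) : ℕ :=
  sInf {w | ∃ x ∈ S, x ≠ 0 ∧ wt x = w}

/-- The minimum weight of a linear code. -/
noncomputable def minWt {n : ℕ} (C : Submodule (ZMod 2) (Fin n → ZMod 2)) : ℕ :=
  minWtSet (C : Set (Fin n → ZMod 2))

/-- The minimum weight of the coset `x + C`. -/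
noncomputable def cosetMinWt {n : ℕ} (C : Submodule (ZMod 2) (Fin n → ZMod 2))
    (x : Fin n → ZMod 2) : ℕ :=
  sInf {w | ∃ c ∈ C, wt (x + c) = w}

/-- The covering radius: the largest minimum weight of a coset. -/
noncomputable def coveringRadius {n : ℕ} (C : Submodule (ZMod 2) (Fin n → ZMod 2)) : ℕ :=
  sSup {r | ∃ x : Fin n → ZMod 2, cosetMinWt C x = r}

/-!
Poisson summation over the doubly even code `C₀` gives `∑_{x ∈ C₀⊥} i ^ wt x = (1 + i) ^ n`,
which is `2 ^ (n / 2)` when `8 ∣ n`. The same sum over `C` vanishes, since translating by a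
codeword of weight `2 (mod 4)` flips the sign of every term. The shadow `C₀⊥ \ C` has
`2 ^ (n / 2)` elements, so its `2 ^ (n / 2)` unimodular terms add up to their number and all
equal `1`: the shadow is doubly even. Then `C₀ ∪ C₁`, the span of `C₀` and any `v₁ ∈ C₁`, is
doubly even, hence self-orthogonal, and has dimension `n / 2`, hence is self-dual; likewise for
`C₀ ∪ C₃`.
-/

open Finset Matrix Module

lemma ZMod.eq_zero_or_eq_one_of_two (a : ZMod 2) : a = 0 ∨ a = 1 := by decide +revert

section Weight

variable {n : ℕ}

lemma wt_eq_sum_val (x : Fin n → ZMod 2) : wt x = ∑ i, (x i).val := by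
  rw [wt, card_filter]
  refine sum_congr rfl fun i _ => ?_
  generalize x i = a
  fin_cases a <;> rfl

lemma sum_eq_wt (x : Fin n → ZMod 2) : ∑ i, x i = (wt x : ZMod 2) := by
  simp only [wt_eq_sum_val, Nat.cast_sum, ZMod.natCast_zmod_val]

lemma dotProduct_eq_wt_mul (x y : Fin n → ZMod 2) : x ⬝ᵥ y = (wt (x * y) : ZMod 2) :=
  sum_eq_wt (x * y)

lemma dotProduct_self_eq_wt (x : Fin n → ZMod 2) : x ⬝ᵥ x = (wt x : ZMod 2) := by
  rw [dotProduct_eq_wt_mul, show x * x = x from funext fun i => by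
    rw [Pi.mul_apply, ← sq, ZMod.pow_card]]

lemma wt_add_add_two_mul_wt_mul (x y : Fin n → ZMod 2) :
    wt (x + y) + 2 * wt (x * y) = wt x + wt y := by
  simp only [wt_eq_sum_val, mul_sum, ← sum_add_distrib]
  refine sum_congr rfl fun i _ => ?_
  simp only [Pi.add_apply, Pi.mul_apply]
  generalize x i = a
  generalize y i = b
  fin_cases a <;> fin_cases b <;> rfl

lemma wt_add_mod_four {x y : Fin n → ZMod 2} (h : x ⬝ᵥ y = 0) :
    wt (x + y) % 4 = (wt x + wt y) % 4 := by
  rw [dotProduct_eq_wt_mul, ZMod.natCast_eq_zero_iff_even] at h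
  obtain ⟨k, hk⟩ := h
  have := wt_add_add_two_mul_wt_mul x y
  omega

lemma dotProduct_eq_zero_of_four_dvd_wt {x y : Fin n → ZMod 2} (hx : 4 ∣ wt x) (hy : 4 ∣ wt y)
    (hxy : 4 ∣ wt (x + y)) : x ⬝ᵥ y = 0 := by
  rw [dotProduct_eq_wt_mul, ZMod.natCast_eq_zero_iff_even, even_iff_two_dvd]
  have := wt_add_add_two_mul_wt_mul x y
  omega

end Weight

section DualCode

variable {n : ℕ}

def dualCode (W : Submodule (ZMod 2) (Fin n → ZMod 2)) : Submodule (ZMod 2) (Fin n → ZMod 2) :=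
  (Matrix.toBilin' (1 : Matrix (Fin n) (Fin n) (ZMod 2))).orthogonal W

lemma coe_dualCode (W : Submodule (ZMod 2) (Fin n → ZMod 2)) :
    (dualCode W : Set (Fin n → ZMod 2)) = dualSet W := by
  ext x
  simp [dualCode, LinearMap.BilinForm.mem_orthogonal_iff, Matrix.toBilin'_apply', dualSet,
    dotProduct_comm x]

lemma finrank_dualCode (W : Submodule (ZMod 2) (Fin n → ZMod 2)) :
    finrank (ZMod 2) (dualCode W) = n - finrank (ZMod 2) W := by
  rw [dualCode, LinearMap.BilinForm.finrank_orthogonal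
    (LinearMap.BilinForm.nondegenerate_toBilin'_of_det_ne_zero' _ (by simp)),
    finrank_fin_fun]

lemma two_mul_finrank_of_coe_eq_dualSet {C : Submodule (ZMod 2) (Fin n → ZMod 2)}
    (hC : (C : Set (Fin n → ZMod 2)) = dualSet C) : 2 * finrank (ZMod 2) C = n := by
  have hrank := finrank_dualCode C
  rw [← SetLike.coe_injective (hC.trans (coe_dualCode C).symm)] at hrank
  have := Submodule.finrank_le C
  rw [finrank_fin_fun] at this
  omega

lemma coe_eq_dualSet_of_subset {D : Submodule (ZMod 2) (Fin n → ZMod 2)}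
    (hD : (D : Set (Fin n → ZMod 2)) ⊆ dualSet D) (hrank : 2 * finrank (ZMod 2) D = n) :
    (D : Set (Fin n → ZMod 2)) = dualSet D := by
  rw [← coe_dualCode] at hD ⊢
  congr 1
  exact Submodule.eq_of_le_of_finrank_eq hD (by rw [finrank_dualCode]; omega)

lemma subset_dualSet_of_four_dvd_wt {D : Submodule (ZMod 2) (Fin n → ZMod 2)}
    (hD : ∀ x ∈ D, 4 ∣ wt x) : (D : Set (Fin n → ZMod 2)) ⊆ dualSet D :=
  fun x hx y hy => dotProduct_eq_zero_of_four_dvd_wt (hD x hx) (hD y hy) (hD _ (D.add_mem hx hy))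

end DualCode

lemma card_filter_mem_submodule {K V : Type*} [Field K] [Fintype K] [AddCommGroup V] [Module K V]
    [Fintype V] [DecidableEq V] (W : Submodule K V) [DecidablePred (· ∈ W)] :
    #{x | x ∈ W} = Fintype.card K ^ finrank K W := by
  rw [← Fintype.card_subtype, Module.card_eq_pow_finrank (K := K) (V := W)]

lemma coe_sup_span_singleton {V : Type*} [AddCommGroup V] [Module (ZMod 2) V]
    (W : Submodule (ZMod 2) V) (v : V) :
    ((W ⊔ Submodule.span (ZMod 2) {v} : Submodule (ZMod 2) V) : Set V) =
      (W : Set V) ∪ (v + ·) '' W := by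
  ext x
  simp only [SetLike.mem_coe, Submodule.mem_sup, Submodule.mem_span_singleton, Set.mem_union,
    Set.mem_image]
  constructor
  · rintro ⟨y, hy, _, ⟨a, rfl⟩, rfl⟩
    obtain rfl | rfl := a.eq_zero_or_eq_one_of_two
    · exact Or.inl (by simpa using hy)
    · exact Or.inr ⟨y, hy, by rw [one_smul, add_comm]⟩
  · rintro (hx | ⟨y, hy, rfl⟩)
    · exact ⟨x, hx, 0, ⟨0, zero_smul _ _⟩, add_zero x⟩
    · exact ⟨y, hy, v, ⟨1, one_smul _ _⟩, add_comm y v⟩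

lemma AddChar.map_sum_eq_prod {ι A M : Type*} [AddCommMonoid A] [CommMonoid M] (ψ : AddChar A M)
    (s : Finset ι) (f : ι → A) : ψ (∑ i ∈ s, f i) = ∏ i ∈ s, ψ (f i) := by
  induction s using Finset.cons_induction with
  | empty => simp
  | cons a s ha ih => rw [sum_cons, prod_cons, map_add_eq_mul, ih]

section CharacterSums

open Complex

variable {n : ℕ}

noncomputable def signChar : AddChar (ZMod 2) ℂ where
  toFun a := (-1) ^ a.val
  map_zero_eq_one' := by simp
  map_add_eq_mul' a b := by rw [ZMod.val_add, ← neg_one_pow_eq_pow_mod_two, pow_add]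

lemma signChar_eq_one_iff (a : ZMod 2) : signChar a = 1 ↔ a = 0 := by
  obtain rfl | rfl := a.eq_zero_or_eq_one_of_two <;> norm_num [signChar, ZMod.val_one]

open scoped Classical in
lemma sum_signChar_dotProduct (W : Submodule (ZMod 2) (Fin n → ZMod 2)) (x : Fin n → ZMod 2) :
    ∑ h with h ∈ W, signChar (x ⬝ᵥ h) =
      if x ∈ dualSet (W : Set (Fin n → ZMod 2)) then (#{h | h ∈ W} : ℂ) else 0 := by
  let ψ : AddChar W ℂ := signChar.compAddMonoidHom
    ((dotProductEquiv (ZMod 2) (Fin n) x) ∘ₗ W.subtype).toAddMonoidHom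
  have hψ : ψ = 0 ↔ x ∈ dualSet W := by
    simp [ψ, AddChar.eq_zero_iff, signChar_eq_one_iff, dualSet]
  calc ∑ h with h ∈ W, signChar (x ⬝ᵥ h) = ∑ h : W, ψ h :=
        sum_subtype (p := (· ∈ W)) _ (fun _ => by simp) _
    _ = _ := by rw [AddChar.sum_eq_ite ψ, Fintype.card_subtype]; simp only [hψ]

lemma sum_I_pow_wt_mul_signChar (h : Fin n → ZMod 2) :
    ∑ x : Fin n → ZMod 2, I ^ wt x * signChar (x ⬝ᵥ h) = (1 + I) ^ n * (-I) ^ wt h := by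
  have factor (b : ZMod 2) :
      ∑ a : ZMod 2, I ^ a.val * signChar (a * b) = (1 + I) * (-I) ^ b.val := by
    rw [show (univ : Finset (ZMod 2)) = {0, 1} from rfl, sum_pair zero_ne_one]
    obtain rfl | rfl := b.eq_zero_or_eq_one_of_two
    · simp [signChar, ZMod.val_one]
    · simp [signChar, ZMod.val_one]
      linear_combination I_sq
  calc ∑ x : Fin n → ZMod 2, I ^ wt x * signChar (x ⬝ᵥ h)
      = ∑ x : Fin n → ZMod 2, ∏ i, I ^ (x i).val * signChar (x i * h i) := by
        refine sum_congr rfl fun x _ => ?_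
        rw [wt_eq_sum_val, dotProduct, AddChar.map_sum_eq_prod, prod_mul_distrib,
          prod_pow_eq_pow_sum]
    _ = ∏ i, ∑ a : ZMod 2, I ^ a.val * signChar (a * h i) := by
        rw [Fintype.prod_sum]
    _ = (1 + I) ^ n * (-I) ^ wt h := by
        rw [prod_congr rfl fun i _ => factor (h i), prod_mul_distrib, prod_const, card_univ,
          Fintype.card_fin, prod_pow_eq_pow_sum, wt_eq_sum_val]

open scoped Classical in
lemma sum_dualSet_I_pow_wt {W : Submodule (ZMod 2) (Fin n → ZMod 2)} (hW : ∀ h ∈ W, 4 ∣ wt h) :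
    ∑ x with x ∈ dualSet (W : Set (Fin n → ZMod 2)), I ^ wt x = (1 + I) ^ n := by
  have hcard : (#{h | h ∈ W} : ℂ) ≠ 0 :=
    Nat.cast_ne_zero.mpr (card_ne_zero.mpr ⟨0, by simp⟩)
  have hdouble := calc
      (#{h | h ∈ W} : ℂ) * ∑ x with x ∈ dualSet (W : Set (Fin n → ZMod 2)), I ^ wt x
        = ∑ x, I ^ wt x * ∑ h with h ∈ W, signChar (x ⬝ᵥ h) := by
          simp only [sum_signChar_dotProduct, mul_ite, mul_zero, sum_ite, sum_const_zero,
            add_zero, mul_sum, mul_comm]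
      _ = ∑ h with h ∈ W, ∑ x, I ^ wt x * signChar (x ⬝ᵥ h) := by
          simp only [mul_sum]; exact sum_comm
      _ = (#{h | h ∈ W} : ℂ) * (1 + I) ^ n := by
          rw [sum_congr rfl fun h hh => ?_, sum_const, nsmul_eq_mul]
          obtain ⟨k, hk⟩ := hW h (mem_filter.mp hh).2
          rw [sum_I_pow_wt_mul_signChar, hk, pow_mul]
          norm_num
  exact mul_left_cancel₀ hcard hdouble

lemma one_add_I_pow_of_eight_dvd (h8 : 8 ∣ n) : (1 + I) ^ n = 2 ^ (n / 2) := by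
  obtain ⟨k, rfl⟩ := h8
  have hsq : (1 + I) ^ 2 = 2 * I := by linear_combination I_sq
  rw [show 8 * k = 2 * (4 * k) by ring, pow_mul, hsq, mul_pow, pow_mul I, I_pow_four]
  norm_num [pow_mul]

open scoped Classical in
lemma sum_I_pow_wt_eq_zero {C : Submodule (ZMod 2) (Fin n → ZMod 2)}
    (hC : (C : Set (Fin n → ZMod 2)) ⊆ dualSet C) {v : Fin n → ZMod 2} (hv : v ∈ C)
    (hv2 : wt v % 4 = 2) : ∑ x with x ∈ C, I ^ wt x = 0 := by
  have hshift : ∀ x ∈ C, I ^ wt x = -I ^ wt (x + v) := by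
    intro x hx
    rw [I_pow_eq_pow_mod (wt (x + v)), wt_add_mod_four (hC hx v hv), ← Nat.add_mod_mod, hv2,
      ← I_pow_eq_pow_mod, pow_add, I_sq]
    ring
  have hanti : ∑ x with x ∈ C, I ^ wt x = -∑ x with x ∈ C, I ^ wt x := by
    rw [← sum_neg_distrib]
    exact sum_equiv (Equiv.addRight v) (by simp [C.add_mem_iff_left hv])
      fun x hx => hshift x (mem_filter.mp hx).2
  linear_combination hanti / 2

end CharacterSums

lemma eq_one_of_norm_eq_one_of_sum_eq_card {ι : Type*} {s : Finset ι} {f : ι → ℂ}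
    (hf : ∀ i ∈ s, ‖f i‖ = 1) (hsum : ∑ i ∈ s, f i = #s) : ∀ i ∈ s, f i = 1 := by
  intro i hi
  have hre : ∀ j ∈ s, (f j).re ≤ 1 := fun j hj => hf j hj ▸ Complex.re_le_norm (f j)
  have hsum_re : ∑ j ∈ s, (f j).re = ∑ j ∈ s, (1 : ℝ) := by
    simpa using congrArg Complex.re hsum
  have hi_re : (f i).re = ‖f i‖ := by
    rw [hf i hi]; exact (sum_eq_sum_iff_of_le hre).mp hsum_re i hi
  rw [Complex.eq_coe_norm_of_nonneg (Complex.re_eq_norm.mp hi_re), hf i hi, Complex.ofReal_one]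

lemma four_dvd_wt_of_mem_shadow {n : ℕ} (h8 : 8 ∣ n) {C C₀ : Submodule (ZMod 2) (Fin n → ZMod 2)}
    (hsd : (C : Set (Fin n → ZMod 2)) = dualSet C)
    (hC₀ : (C₀ : Set (Fin n → ZMod 2)) = {x | x ∈ C ∧ 4 ∣ wt x})
    (hrank : finrank (ZMod 2) C = finrank (ZMod 2) C₀ + 1)
    {v : Fin n → ZMod 2} (hvC : v ∈ C) (hvC₀ : v ∉ C₀)
    {x : Fin n → ZMod 2} (hx : x ∈ dualSet (C₀ : Set (Fin n → ZMod 2)) \ C) : 4 ∣ wt x := by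
  classical
  have hC₀4 : ∀ y ∈ C₀, 4 ∣ wt y := fun y hy => (hC₀.subset hy).2
  have hv2 : wt v % 4 = 2 := by
    have heven : (wt v : ZMod 2) = 0 := by
      rw [← dotProduct_self_eq_wt]; exact hsd.subset hvC v hvC
    have hv4 : ¬ 4 ∣ wt v := fun h => hvC₀ (hC₀.superset ⟨hvC, h⟩)
    obtain ⟨k, hk⟩ := (ZMod.natCast_eq_zero_iff_even).mp heven
    omega
  have hn := two_mul_finrank_of_coe_eq_dualSet hsd
  set s : Finset (Fin n → ZMod 2) := {y | y ∈ dualSet (C₀ : Set (Fin n → ZMod 2))}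
  set c : Finset (Fin n → ZMod 2) := {y | y ∈ C}
  have hcs : c ⊆ s := by
    intro y
    simp only [s, c, mem_filter, mem_univ, true_and]
    exact fun hy z hz => hsd.subset hy z (hC₀.subset hz).1
  have hcard : #(s \ c) = 2 ^ finrank (ZMod 2) C := by
    have hs : s = ({y | y ∈ dualCode C₀} : Finset _) := by
      simp only [s, ← SetLike.mem_coe, coe_dualCode]
    rw [card_sdiff_of_subset hcs, hs, card_filter_mem_submodule, card_filter_mem_submodule,
      ZMod.card, finrank_dualCode, show n - finrank (ZMod 2) C₀ = finrank (ZMod 2) C + 1 by omega,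
      pow_succ]
    omega
  have hsum : ∑ y ∈ s \ c, Complex.I ^ wt y = #(s \ c) := by
    rw [sum_sdiff_eq_sub hcs, sum_dualSet_I_pow_wt hC₀4, sum_I_pow_wt_eq_zero hsd.subset hvC hv2,
      sub_zero, one_add_I_pow_of_eight_dvd h8, hcard, show n / 2 = finrank (ZMod 2) C by omega]
    norm_num
  have hx1 := eq_one_of_norm_eq_one_of_sum_eq_card (fun y _ => by simp) hsum x (by simpa [s, c])
  exact (Complex.isPrimitiveRoot_I.pow_eq_one_iff_dvd _).mp hx1

lemma exists_selfDual_doublyEven_neighbor {n : ℕ} {C C₀ : Submodule (ZMod 2) (Fin n → ZMod 2)}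
    (hC₀C : C₀ ≤ C) (hC₀ : ∀ x ∈ C₀, 4 ∣ wt x) (hrank : 2 * (finrank (ZMod 2) C₀ + 1) = n)
    (v : Fin n → ZMod 2) (hv : ∀ x ∈ (v + ·) '' (C₀ : Set (Fin n → ZMod 2)), x ∉ C ∧ 4 ∣ wt x) :
    ∃ D : Submodule (ZMod 2) (Fin n → ZMod 2),
      (D : Set (Fin n → ZMod 2)) = ↑C₀ ∪ (v + ·) '' ↑C₀ ∧
      (D : Set (Fin n → ZMod 2)) = dualSet (D : Set (Fin n → ZMod 2)) ∧
      (∀ x ∈ D, 4 ∣ wt x) ∧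
      (D : Set (Fin n → ZMod 2)) ∩ ↑C = ↑C₀ := by
  have hD := coe_sup_span_singleton C₀ v
  have hvC₀ : v ∉ C₀ := fun h => (hv v ⟨0, C₀.zero_mem, add_zero v⟩).1 (hC₀C h)
  have hD4 : ∀ x ∈ C₀ ⊔ Submodule.span (ZMod 2) {v}, 4 ∣ wt x := by
    intro x hx
    rw [← SetLike.mem_coe, hD] at hx
    rcases hx with hx | hx
    exacts [hC₀ x hx, (hv x hx).2]
  refine ⟨C₀ ⊔ Submodule.span (ZMod 2) {v}, hD,
    coe_eq_dualSet_of_subset (subset_dualSet_of_four_dvd_wt hD4) ?_, hD4, ?_⟩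
  · rw [Submodule.finrank_sup_span_singleton hvC₀, hrank]
  · ext x
    rw [hD]
    constructor
    · rintro ⟨hx | hx, hxC⟩
      exacts [hx, absurd hxC (hv x hx).1]
    · exact fun hx => ⟨Or.inl hx, hC₀C hx⟩

theorem stmt4_general {n : ℕ} (h8 : 8 ∣ n) (C C₀ : Submodule (ZMod 2) (Fin n → ZMod 2))
    (hsd : (C : Set (Fin n → ZMod 2)) = dualSet (C : Set (Fin n → ZMod 2)))
    (hC₀ : (C₀ : Set (Fin n → ZMod 2)) = {x | x ∈ C ∧ 4 ∣ wt x})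
    (C₁ C₂ C₃ : Set (Fin n → ZMod 2))
    (h₁ : ∃ v, C₁ = (v + ·) '' (C₀ : Set (Fin n → ZMod 2)))
    (h₂ : ∃ v, C₂ = (v + ·) '' (C₀ : Set (Fin n → ZMod 2)))
    (h₃ : ∃ v, C₃ = (v + ·) '' (C₀ : Set (Fin n → ZMod 2)))
    (hdisj : List.Pairwise Disjoint [(C₀ : Set (Fin n → ZMod 2)), C₁, C₂, C₃])
    (hC : (C : Set (Fin n → ZMod 2)) = ↑C₀ ∪ C₂)
    (hS : dualSet (C₀ : Set (Fin n → ZMod 2)) \ ↑C = C₁ ∪ C₃) :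
    ∃ D₁ D₃ : Submodule (ZMod 2) (Fin n → ZMod 2),
      (D₁ : Set (Fin n → ZMod 2)) = ↑C₀ ∪ C₁ ∧
      (D₃ : Set (Fin n → ZMod 2)) = ↑C₀ ∪ C₃ ∧
      (D₁ : Set (Fin n → ZMod 2)) = dualSet (D₁ : Set (Fin n → ZMod 2)) ∧
      (∀ x ∈ D₁, 4 ∣ wt x) ∧
      (D₃ : Set (Fin n → ZMod 2)) = dualSet (D₃ : Set (Fin n → ZMod 2)) ∧
      (∀ x ∈ D₃, 4 ∣ wt x) ∧
      (D₁ : Set (Fin n → ZMod 2)) ∩ ↑C = ↑C₀ ∧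
      (D₃ : Set (Fin n → ZMod 2)) ∩ ↑C = ↑C₀ ∧
      Module.finrank (ZMod 2) ↥C₀ = n / 2 - 1 := by
  obtain ⟨v₂, rfl⟩ := h₂
  have hC₀C : C₀ ≤ C := fun x hx => (hC₀.subset hx).1
  have hv₂C : v₂ ∈ C := hC.superset (Or.inr ⟨0, C₀.zero_mem, add_zero v₂⟩)
  have hv₂C₀ : v₂ ∉ C₀ := fun hv₂ =>
    Set.disjoint_left.mp ((List.pairwise_cons.mp hdisj).1 ((v₂ + ·) '' C₀) (by simp)) hv₂
      ⟨0, C₀.zero_mem, add_zero v₂⟩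
  have hrank : finrank (ZMod 2) C = finrank (ZMod 2) C₀ + 1 := by
    rw [← Submodule.finrank_sup_span_singleton hv₂C₀,
      SetLike.coe_injective (hC.trans (coe_sup_span_singleton C₀ v₂).symm)]
  have hn := two_mul_finrank_of_coe_eq_dualSet hsd
  have hshadow : ∀ x ∈ C₁ ∪ C₃, x ∉ C ∧ 4 ∣ wt x := by
    rw [← hS]
    exact fun x hx => ⟨hx.2, four_dvd_wt_of_mem_shadow h8 hsd hC₀ hrank hv₂C hv₂C₀ hx⟩
  obtain ⟨v₁, rfl⟩ := h₁
  obtain ⟨v₃, rfl⟩ := h₃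
  have hC₀4 : ∀ x ∈ C₀, 4 ∣ wt x := fun x hx => (hC₀.subset hx).2
  obtain ⟨D₁, hD₁, hD₁sd, hD₁4, hD₁C⟩ := exists_selfDual_doublyEven_neighbor hC₀C hC₀4 (by omega)
    v₁ fun x hx => hshadow x (Or.inl hx)
  obtain ⟨D₃, hD₃, hD₃sd, hD₃4, hD₃C⟩ := exists_selfDual_doublyEven_neighbor hC₀C hC₀4 (by omega)
    v₃ fun x hx => hshadow x (Or.inr hx)
  exact ⟨D₁, D₃, hD₁, hD₃, hD₁sd, hD₁4, hD₃sd, hD₃4, hD₁C, hD₃C, by omega⟩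

theorem stmt4 {n : ℕ} (h8 : 8 ∣ n) (C C₀ : Submodule (ZMod 2) (Fin n → ZMod 2))
    (hsd : (C : Set (Fin n → ZMod 2)) = dualSet (C : Set (Fin n → ZMod 2)))
    (hse : ∃ x ∈ C, wt x % 4 = 2)
    (hC₀ : (C₀ : Set (Fin n → ZMod 2)) = {x | x ∈ C ∧ 4 ∣ wt x})
    (C₁ C₂ C₃ : Set (Fin n → ZMod 2))
    (h₁ : ∃ v, C₁ = (v + ·) '' (C₀ : Set (Fin n → ZMod 2)))
    (h₂ : ∃ v, C₂ = (v + ·) '' (C₀ : Set (Fin n → ZMod 2)))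
    (h₃ : ∃ v, C₃ = (v + ·) '' (C₀ : Set (Fin n → ZMod 2)))
    (hdisj : List.Pairwise Disjoint [(C₀ : Set (Fin n → ZMod 2)), C₁, C₂, C₃])
    (hpart : dualSet (C₀ : Set (Fin n → ZMod 2)) = ↑C₀ ∪ C₁ ∪ C₂ ∪ C₃)
    (hC : (C : Set (Fin n → ZMod 2)) = ↑C₀ ∪ C₂)
    (hS : dualSet (C₀ : Set (Fin n → ZMod 2)) \ ↑C = C₁ ∪ C₃) :
    ∃ D₁ D₃ : Submodule (ZMod 2) (Fin n → ZMod 2),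
      (D₁ : Set (Fin n → ZMod 2)) = ↑C₀ ∪ C₁ ∧
      (D₃ : Set (Fin n → ZMod 2)) = ↑C₀ ∪ C₃ ∧
      (D₁ : Set (Fin n → ZMod 2)) = dualSet (D₁ : Set (Fin n → ZMod 2)) ∧
      (∀ x ∈ D₁, 4 ∣ wt x) ∧
      (D₃ : Set (Fin n → ZMod 2)) = dualSet (D₃ : Set (Fin n → ZMod 2)) ∧
      (∀ x ∈ D₃, 4 ∣ wt x) ∧
      (D₁ : Set (Fin n → ZMod 2)) ∩ ↑C = ↑C₀ ∧
      (D₃ : Set (Fin n → ZMod 2)) ∩ ↑C = ↑C₀ ∧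
      Module.finrank (ZMod 2) ↥C₀ = n / 2 - 1 :=
  stmt4_general h8 C C₀ hsd hC₀ C₁ C₂ C₃ h₁ h₂ h₃ hdisj hC hS
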